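/- arXiv:2401.17359 — 4 statements merged into one kernel-verified Lean document; each statement's English description precedes it below -/
import Mathlib

section
/- Let p_x, p_z ∈ (0, 1/2) and set λ_x = p_x/(1-p_x), λ_z = p_z/(1-p_z). Then ((1-λ_x)/(1+λ_x))^2 = (λ_z + λ_z²)/(1+λ_z³) holds if and only if ((1-p_x)³ + p_x³)·((1-p_z)³ + p_z³) = 1/4. -/
/-!
Both sides only depend on `q = p (1 - p)`: the ratio `(1 - λ) / (1 + λ)` is `1 - 2p`, whose square is
`1 - 4q`; after cancelling `1 + λ` the right-hand side is `λ / (1 - λ + λ²) = q / (1 - 3q)`; and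
`(1 - p)³ + p³ = 1 - 3q`. Writing `a = q_x`, `b = q_z`, both conditions become multiples of
`1 - 4a - 4b + 12ab = 0`.
-/

lemma one_sub_odds_div_one_add_odds {p : ℝ} (hp : p ≠ 1) :
    (1 - p / (1 - p)) / (1 + p / (1 - p)) = 1 - 2 * p := by
  have : 1 - p ≠ 0 := sub_ne_zero.mpr hp.symm
  field_simp
  ring

lemma one_sub_cube_add_cube (p : ℝ) : (1 - p) ^ 3 + p ^ 3 = 1 - 3 * (p * (1 - p)) := by
  ring

lemma one_sub_cube_add_cube_pos (p : ℝ) : 0 < (1 - p) ^ 3 + p ^ 3 := by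
  have : (1 - p) ^ 3 + p ^ 3 = (3 * (2 * p - 1) ^ 2 + 1) / 4 := by ring
  rw [this]
  positivity

lemma odds_add_sq_div_one_add_cube {p : ℝ} (hp : p ≠ 1) :
    (p / (1 - p) + (p / (1 - p)) ^ 2) / (1 + (p / (1 - p)) ^ 3)
      = p * (1 - p) / ((1 - p) ^ 3 + p ^ 3) := by
  have h₁ : 1 - p ≠ 0 := sub_ne_zero.mpr hp.symm
  have h₂ := (one_sub_cube_add_cube_pos p).ne'
  field_simp
  ring

lemma one_sub_four_mul_eq_div_iff {a b : ℝ} (hb : 1 - 3 * b ≠ 0) :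
    1 - 4 * a = b / (1 - 3 * b) ↔ (1 - 3 * a) * (1 - 3 * b) = 1 / 4 := by
  rw [eq_div_iff hb]
  constructor <;> intro h
  · linear_combination (3 / 4) * h
  · linear_combination (4 / 3) * h

/-- BPD duality condition for `R = 3`: with `λ_x = p_x/(1-p_x)`, `λ_z = p_z/(1-p_z)`,
`((1-λ_x)/(1+λ_x))² = (λ_z+λ_z²)/(1+λ_z³)` iff `((1-p_x)³ + p_x³)((1-p_z)³ + p_z³) = 1/4`. -/
theorem bpd_duality_R3 (px pz : ℝ) (hx : px ∈ Set.Ioo (0:ℝ) (1/2))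
    (hz : pz ∈ Set.Ioo (0:ℝ) (1/2)) :
    ((1 - px/(1-px)) / (1 + px/(1-px)))^2
        = ((pz/(1-pz)) + (pz/(1-pz))^2) / (1 + (pz/(1-pz))^3)
      ↔ ((1-px)^3 + px^3) * ((1-pz)^3 + pz^3) = 1/4 := by
  have hpx : px ≠ 1 := (hx.2.trans (by norm_num)).ne
  have hpz : pz ≠ 1 := (hz.2.trans (by norm_num)).ne
  have hz_pos := one_sub_cube_add_cube_pos pz
  rw [one_sub_cube_add_cube pz] at hz_pos
  rw [one_sub_odds_div_one_add_odds hpx, odds_add_sq_div_one_add_cube hpz,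
    one_sub_cube_add_cube px, one_sub_cube_add_cube pz,
    show (1 - 2 * px) ^ 2 = 1 - 4 * (px * (1 - px)) by ring]
  exact one_sub_four_mul_eq_div_iff hz_pos.ne'
end

section
/- For each integer R ≥ 2, the equation ((1-p)^R + p^R)² = 2^{1-R} has a unique solution p ∈ (0, 1/2). For R = 2 this solution is p = (1 - √(√2 - 1))/2, and for R = 3 it is p = (3 - √3)/6. -/
lemma selfdual_aux (R : ℕ) (hR : 2 ≤ R) :
    ∃! p : ℝ, p ∈ Set.Ioo (0:ℝ) (1/2) ∧ ((1-p)^R + p^R)^2 = (2:ℝ) ^ ((1:ℤ) - (R:ℤ)) := by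
  have hRpos : 0 < R := by omega
  set g : ℝ → ℝ := fun p => (1-p)^R + p^R with hg
  set f : ℝ → ℝ := fun p => (g p)^2 with hf
  -- value of the target
  have ht : (2:ℝ) ^ ((1:ℤ) - (R:ℤ)) = 2 / 2^R := by
    rw [zpow_sub₀ (two_ne_zero), zpow_one, zpow_natCast]
  set t : ℝ := 2 / 2^R with htdef
  have h2R : (4:ℝ) ≤ 2^R := by
    calc (4:ℝ) = 2^2 := by norm_num
    _ ≤ 2^R := pow_le_pow_right₀ one_le_two hR
  have htpos : 0 < t := by positivity
  have htlt : t < 1 := by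
    rw [div_lt_one (by positivity)]; linarith
  -- g strictly decreasing on Icc 0 (1/2)
  have hganti : StrictAntiOn g (Set.Icc (0:ℝ) (1/2)) := by
    apply strictAntiOn_of_deriv_neg (convex_Icc _ _)
    · exact (by continuity : Continuous g).continuousOn
    · intro x hx
      rw [interior_Icc] at hx
      have h1 : HasDerivAt (fun p : ℝ => (1-p)^R) ((R:ℝ) * (1-x)^(R-1) * (-1)) x :=
        ((hasDerivAt_id x).const_sub 1).pow R
      have h2 : HasDerivAt (fun p : ℝ => p^R) ((R:ℝ) * x^(R-1)) x := by
        simpa using hasDerivAt_pow R x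
      have hdg : HasDerivAt g ((R:ℝ) * (1-x)^(R-1) * (-1) + (R:ℝ) * x^(R-1)) x := h1.add h2
      rw [hdg.deriv]
      have hxlt : x < 1 - x := by linarith [hx.2]
      have hpow : x^(R-1) < (1-x)^(R-1) :=
        pow_lt_pow_left₀ hxlt hx.1.le (by omega)
      have hRr : (0:ℝ) < R := by exact_mod_cast hRpos
      nlinarith
  have hgnonneg : ∀ x ∈ Set.Icc (0:ℝ) (1/2), 0 ≤ g x := by
    intro x hx
    have h1x : (0:ℝ) ≤ 1 - x := by linarith [hx.2]
    exact add_nonneg (pow_nonneg h1x R) (pow_nonneg hx.1 R)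
  have hanti : StrictAntiOn f (Set.Icc (0:ℝ) (1/2)) := by
    intro x hx y hy hxy
    have := hganti hx hy hxy
    have := hgnonneg y hy
    simp only [hf]
    nlinarith
  have hg0 : g 0 = 1 := by simp [hg, zero_pow hRpos.ne']
  have hgh : g (1/2) = t := by
    simp only [hg, htdef]
    rw [show (1:ℝ) - 1/2 = 1/2 by norm_num, div_pow, one_pow]
    ring
  have hf0 : f 0 = 1 := by simp [hf, hg0]
  have hfh : f (1/2) = t^2 := by simp only [hf, hgh]
  -- existence via IVT
  have hcont : ContinuousOn f (Set.Icc (0:ℝ) (1/2)) :=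
    (by continuity : Continuous f).continuousOn
  have hsub := intermediate_value_Icc' (by norm_num : (0:ℝ) ≤ 1/2) hcont
  have htmem : t ∈ Set.Icc (f (1/2)) (f 0) := by
    rw [hf0, hfh]
    constructor <;> nlinarith
  obtain ⟨p, hpmem, hpval⟩ := hsub htmem
  have hp0 : p ≠ 0 := by
    rintro rfl; rw [hf0] at hpval; linarith
  have hph : p ≠ 1/2 := by
    rintro rfl; rw [hfh] at hpval; nlinarith
  have hpIoo : p ∈ Set.Ioo (0:ℝ) (1/2) :=
    ⟨hpmem.1.lt_of_ne' hp0, hpmem.2.lt_of_ne hph⟩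
  refine ⟨p, ⟨hpIoo, by rw [ht]; exact hpval⟩, ?_⟩
  rintro q ⟨hqIoo, hqval⟩
  have hqIcc : q ∈ Set.Icc (0:ℝ) (1/2) := ⟨hqIoo.1.le, hqIoo.2.le⟩
  have : f q = f p := by rw [hpval]; rw [ht] at hqval; exact hqval
  exact hanti.injOn hqIcc hpmem this

/-- For each `R ≥ 2`, the self-dual equation `((1-p)^R + p^R)² = 2^{1-R}` has a unique solution
`p ∈ (0, 1/2)`; for `R = 2` it is `(1 - √(√2 - 1))/2`, and for `R = 3` it is `(3 - √3)/6`. -/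
theorem selfdual_error_rates :
    (∀ R : ℕ, 2 ≤ R →
      ∃! p : ℝ, p ∈ Set.Ioo (0:ℝ) (1/2) ∧ ((1-p)^R + p^R)^2 = (2:ℝ) ^ ((1:ℤ) - (R:ℤ))) ∧
    ((1 - Real.sqrt (Real.sqrt 2 - 1))/2 ∈ Set.Ioo (0:ℝ) (1/2) ∧
      ((1 - (1 - Real.sqrt (Real.sqrt 2 - 1))/2)^2 + ((1 - Real.sqrt (Real.sqrt 2 - 1))/2)^2)^2
        = (2:ℝ) ^ ((1:ℤ) - (2:ℤ))) ∧
    ((3 - Real.sqrt 3)/6 ∈ Set.Ioo (0:ℝ) (1/2) ∧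
      ((1 - (3 - Real.sqrt 3)/6)^3 + ((3 - Real.sqrt 3)/6)^3)^2
        = (2:ℝ) ^ ((1:ℤ) - (3:ℤ))) := by
  refine ⟨selfdual_aux, ⟨?_, ?_⟩, ?_, ?_⟩
  · -- membership for R = 2
    have hsq2 : Real.sqrt 2 ^ 2 = 2 := Real.sq_sqrt (by norm_num)
    have h1 : (1:ℝ) < Real.sqrt 2 := by nlinarith [Real.sqrt_nonneg 2]
    have h2 : Real.sqrt 2 < 2 := by nlinarith [Real.sqrt_nonneg 2]
    have hs0 : 0 < Real.sqrt (Real.sqrt 2 - 1) := Real.sqrt_pos.2 (by linarith)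
    have hsq : Real.sqrt (Real.sqrt 2 - 1) ^ 2 = Real.sqrt 2 - 1 :=
      Real.sq_sqrt (by linarith)
    have hs1 : Real.sqrt (Real.sqrt 2 - 1) < 1 := by nlinarith
    exact ⟨by linarith, by linarith⟩
  · -- equation for R = 2
    have hsq : Real.sqrt (Real.sqrt 2 - 1) ^ 2 = Real.sqrt 2 - 1 := by
      rw [Real.sq_sqrt]
      have : (1:ℝ) ≤ Real.sqrt 2 := by
        rw [show (1:ℝ) = Real.sqrt 1 by simp]
        exact Real.sqrt_le_sqrt (by norm_num)
      linarith
    have h2 : Real.sqrt 2 ^ 2 = 2 := Real.sq_sqrt (by norm_num)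
    rw [show ((1:ℤ) - (2:ℤ)) = -1 by norm_num, zpow_neg, zpow_one]
    nlinarith [Real.sqrt_nonneg 2, Real.sqrt_nonneg (Real.sqrt 2 - 1)]
  · -- membership for R = 3
    have hsq3 : Real.sqrt 3 ^ 2 = 3 := Real.sq_sqrt (by norm_num)
    have h1 : (1:ℝ) < Real.sqrt 3 := by nlinarith [Real.sqrt_nonneg 3]
    have h2 : Real.sqrt 3 < 2 := by nlinarith [Real.sqrt_nonneg 3]
    exact ⟨by linarith, by linarith⟩
  · -- equation for R = 3
    have h3 : Real.sqrt 3 ^ 2 = 3 := Real.sq_sqrt (by norm_num)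
    rw [show ((1:ℤ) - (3:ℤ)) = -2 by norm_num, zpow_neg]
    rw [show ((2:ℝ)^(2:ℤ)) = 4 by norm_num]
    nlinarith [Real.sqrt_nonneg 3]
end

section
/- Let V ⊆ F_2^N be a subspace, K > 0, and for E ∈ F_2^N define Z(K,E) = Σ_{C ∈ V} exp(K·Σ_μ (-1)^{E_μ + C_μ}). Then for every E, Z(K,E) ≤ Z(K,0). Equivalently, the partition function with sign-randomness E is maximized at E = 0. -/
open scoped Classical

private def chi (a : ZMod 2) : ℝ := (-1 : ℝ) ^ a.val

private lemma chi_add (a b : ZMod 2) : chi (a + b) = chi a * chi b := by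
  unfold chi
  rw [← pow_add, neg_one_pow_eq_pow_mod_two, neg_one_pow_eq_pow_mod_two (n := a.val + b.val)]
  congr 1
  revert a b
  decide

private lemma abs_chi (a : ZMod 2) : |chi a| = 1 := by
  fin_cases a <;> simp [chi]

private lemma chi_sum {ι : Type*} (S : Finset ι) (f : ι → ZMod 2) :
    ∏ i ∈ S, chi (f i) = chi (∑ i ∈ S, f i) := by
  induction S using Finset.cons_induction with
  | empty => simp [chi]
  | cons a s ha ih => rw [Finset.prod_cons, Finset.sum_cons, chi_add, ih]

private lemma char_sum_nonneg {N : ℕ} (V : Submodule (ZMod 2) (Fin N → ZMod 2))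
    (S : Finset (Fin N)) :
    0 ≤ ∑ C : V, ∏ i ∈ S, chi ((C : Fin N → ZMod 2) i) := by
  have h : ∀ C : V, (∏ i ∈ S, chi ((C : Fin N → ZMod 2) i))
      = chi (∑ i ∈ S, (C : Fin N → ZMod 2) i) := fun C => chi_sum S _
  simp_rw [h]
  by_cases h0 : ∀ C : V, (∑ i ∈ S, (C : Fin N → ZMod 2) i) = 0
  · have : ∀ C : V, chi (∑ i ∈ S, (C : Fin N → ZMod 2) i) = 1 := by
      intro C; rw [h0 C]; simp [chi]
    simp_rw [this]
    positivity
  · push_neg at h0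
    obtain ⟨C₀, hC₀⟩ := h0
    have h1 : (∑ i ∈ S, (C₀ : Fin N → ZMod 2) i) = 1 := by
      have : ∀ a : ZMod 2, a ≠ 0 → a = 1 := by decide
      exact this _ hC₀
    have key : (∑ C : V, chi (∑ i ∈ S, (C : Fin N → ZMod 2) i))
        = - ∑ C : V, chi (∑ i ∈ S, (C : Fin N → ZMod 2) i) := by
      nth_rewrite 2 [← Fintype.sum_equiv (Equiv.addRight C₀)
        (fun C : V => chi (∑ i ∈ S, ((C + C₀ : V) : Fin N → ZMod 2) i))
        (fun C : V => chi (∑ i ∈ S, (C : Fin N → ZMod 2) i)) (fun C => rfl)]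
      rw [← Finset.sum_neg_distrib]
      apply Finset.sum_congr rfl
      intro C _
      have : (∑ i ∈ S, ((C + C₀ : V) : Fin N → ZMod 2) i)
          = (∑ i ∈ S, (C : Fin N → ZMod 2) i) + (∑ i ∈ S, (C₀ : Fin N → ZMod 2) i) := by
        rw [← Finset.sum_add_distrib]
        apply Finset.sum_congr rfl
        intro i _
        simp
      rw [this, chi_add, h1]
      simp only [chi]
      have hv1 : ((1 : ZMod 2)).val = 1 := by decide
      rw [hv1]
      ring
    linarith

/-- The partition function with sign randomness `E` is maximized at `E = 0`:
for a subspace `V ⊆ F_2^N` and `K > 0`,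
`Σ_{C∈V} exp(K Σ_μ (-1)^{E_μ+C_μ}) ≤ Σ_{C∈V} exp(K Σ_μ (-1)^{C_μ})`. -/
theorem partition_function_max_at_zero {N : ℕ}
    (V : Submodule (ZMod 2) (Fin N → ZMod 2)) (K : ℝ) (hK : 0 < K)
    (E : Fin N → ZMod 2) :
    ∑ C : V, Real.exp (K * ∑ μ, (-1 : ℝ) ^ ((E μ + (C : Fin N → ZMod 2) μ).val))
      ≤ ∑ C : V, Real.exp (K * ∑ μ, (-1 : ℝ) ^ (((C : Fin N → ZMod 2) μ).val)) := by
  have hs : 0 < Real.sinh K := Real.sinh_pos_iff.2 hK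
  have hc : 0 < Real.cosh K := Real.cosh_pos K
  have expand : ∀ x : Fin N → ZMod 2,
      Real.exp (K * ∑ μ, (-1 : ℝ) ^ ((x μ).val)) =
      ∑ t ∈ (Finset.univ : Finset (Fin N)).powerset,
        (Real.cosh K ^ t.card * Real.sinh K ^ (Finset.univ \ t).card) *
          ∏ i ∈ Finset.univ \ t, chi (x i) := by
    intro x
    rw [Finset.mul_sum, Real.exp_sum]
    have h1 : ∀ μ, Real.exp (K * (-1 : ℝ) ^ ((x μ).val))
        = Real.cosh K + Real.sinh K * chi (x μ) := by
      intro μ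
      have hv : (x μ).val = 0 ∨ (x μ).val = 1 := by
        have := (x μ).val_lt
        omega
      rcases hv with h | h
      · simp only [chi, h, pow_zero, mul_one]
        rw [Real.cosh_add_sinh]
      · simp only [chi, h, pow_one, mul_neg_one]
        rw [← Real.cosh_sub_sinh]
        ring
    simp_rw [h1]
    rw [Finset.prod_add]
    apply Finset.sum_congr rfl
    intro t ht
    rw [Finset.prod_const, Finset.prod_mul_distrib, Finset.prod_const]
    ring
  simp_rw [show ∀ (C : V) (μ : Fin N), E μ + (C : Fin N → ZMod 2) μ = ((E + C) μ) from
    fun C μ => rfl]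
  simp_rw [expand]
  rw [Finset.sum_comm, Finset.sum_comm (s := Finset.univ)]
  apply Finset.sum_le_sum
  intro t _
  rw [← Finset.mul_sum, ← Finset.mul_sum]
  apply mul_le_mul_of_nonneg_left _ (by positivity)
  have hsplit : ∀ C : V, (∏ i ∈ Finset.univ \ t, chi ((E + (C : Fin N → ZMod 2)) i))
      = (∏ i ∈ Finset.univ \ t, chi (E i)) * ∏ i ∈ Finset.univ \ t, chi ((C : Fin N → ZMod 2) i) := by
    intro C
    rw [← Finset.prod_mul_distrib]
    apply Finset.prod_congr rfl
    intro i _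
    rw [Pi.add_apply, chi_add]
  simp_rw [hsplit]
  rw [← Finset.mul_sum]
  have hA := char_sum_nonneg V (Finset.univ \ t)
  have hε : (∏ i ∈ Finset.univ \ t, chi (E i)) ≤ 1 := by
    have : |∏ i ∈ Finset.univ \ t, chi (E i)| = 1 := by
      rw [Finset.abs_prod]
      simp [abs_chi]
    calc (∏ i ∈ Finset.univ \ t, chi (E i)) ≤ |∏ i ∈ Finset.univ \ t, chi (E i)| := le_abs_self _
    _ = 1 := this
  exact mul_le_of_le_one_left hA hε
end

section
/- For K_x, K_y, K_z > 0 satisfying e^{-2(K_x+K_y)} + e^{-2(K_y+K_z)} + e^{-2(K_x+K_z)} = 1, it holds that e^{-2(K_y+K_z)} = (tanh K_x + tanh K_y · tanh K_z)/(1 + tanh K_x · tanh K_y · tanh K_z), and similarly under cyclic permutations of (x,y,z). That is, the constraint surface is fixed under the generalized Kramers–Wannier duality map. -/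
/-!
Write `a = e^{-2K_x}`, `b = e^{-2K_y}`, `c = e^{-2K_z}`, so that `tanh K_x = (1 - a)/(1 + a)` etc.
After multiplying through by `(1 + a)(1 + b)(1 + c)`, the denominator of the duality formula becomes
`2(1 + ab + bc + ca)` and its numerator `2(1 + bc - ab - ca)`; on the surface `ab + bc + ca = 1`
these are `4` and `4bc`.
-/

open Real

theorem Real.tanh_eq_one_sub_exp_div (x : ℝ) :
    tanh x = (1 - exp (-2 * x)) / (1 + exp (-2 * x)) := by
  have hexp : exp (-2 * x) = exp (-x) / exp x := by
    rw [div_eq_mul_inv, ← exp_neg, ← exp_add]; ring_nf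
  rw [tanh_eq, hexp]
  field_simp

theorem mul_eq_div_of_mul_add_mul_add_mul_eq_one {K : Type*} [Field K] [NeZero (2 : K)]
    {a b c : K} (ha : 1 + a ≠ 0) (hb : 1 + b ≠ 0) (hc : 1 + c ≠ 0)
    (h : a * b + b * c + c * a = 1) :
    b * c = ((1 - a) / (1 + a) + (1 - b) / (1 + b) * ((1 - c) / (1 + c)))
      / (1 + (1 - a) / (1 + a) * ((1 - b) / (1 + b)) * ((1 - c) / (1 + c))) := by
  have hP : (1 + a) * (1 + b) * (1 + c) ≠ 0 := mul_ne_zero (mul_ne_zero ha hb) hc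
  have hnum : (1 - a) / (1 + a) + (1 - b) / (1 + b) * ((1 - c) / (1 + c))
      = 2 * 2 * (b * c) / ((1 + a) * (1 + b) * (1 + c)) := by
    field_simp
    linear_combination (-2) * h
  have hden : 1 + (1 - a) / (1 + a) * ((1 - b) / (1 + b)) * ((1 - c) / (1 + c))
      = 2 * 2 / ((1 + a) * (1 + b) * (1 + c)) := by
    field_simp
    linear_combination 2 * h
  rw [hnum, hden, div_div_div_cancel_right₀ hP,
    mul_div_cancel_left₀ _ (mul_ne_zero two_ne_zero two_ne_zero)]

theorem kw_selfdual_surface_general (Kx Ky Kz : ℝ)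
    (h : Real.exp (-2*(Kx+Ky)) + Real.exp (-2*(Ky+Kz)) + Real.exp (-2*(Kx+Kz)) = 1) :
    Real.exp (-2*(Ky+Kz))
        = (Real.tanh Kx + Real.tanh Ky * Real.tanh Kz)
          / (1 + Real.tanh Kx * Real.tanh Ky * Real.tanh Kz) ∧
    Real.exp (-2*(Kx+Kz))
        = (Real.tanh Ky + Real.tanh Kz * Real.tanh Kx)
          / (1 + Real.tanh Kx * Real.tanh Ky * Real.tanh Kz) ∧
    Real.exp (-2*(Kx+Ky))
        = (Real.tanh Kz + Real.tanh Kx * Real.tanh Ky)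
          / (1 + Real.tanh Kx * Real.tanh Ky * Real.tanh Kz) := by
  have exp_pair (K L : ℝ) : exp (-2 * (K + L)) = exp (-2 * K) * exp (-2 * L) := by
    rw [← exp_add]; ring_nf
  have one_add_exp_ne (K : ℝ) : 1 + exp (-2 * K) ≠ 0 := by positivity
  simp only [exp_pair, tanh_eq_one_sub_exp_div] at h ⊢
  refine ⟨?_, ?_, ?_⟩
  · exact mul_eq_div_of_mul_add_mul_add_mul_eq_one (one_add_exp_ne Kx) (one_add_exp_ne Ky)
      (one_add_exp_ne Kz) (by linear_combination h)
  · rw [mul_comm, mul_eq_div_of_mul_add_mul_add_mul_eq_one (one_add_exp_ne Ky)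
      (one_add_exp_ne Kz) (one_add_exp_ne Kx) (by linear_combination h)]
    ring
  · rw [mul_eq_div_of_mul_add_mul_add_mul_eq_one (one_add_exp_ne Kz) (one_add_exp_ne Kx)
      (one_add_exp_ne Ky) (by linear_combination h)]
    ring

/-- The constraint surface `e^{-2(K_x+K_y)} + e^{-2(K_y+K_z)} + e^{-2(K_x+K_z)} = 1` is fixed
under the generalized Kramers–Wannier duality:
`e^{-2(K_y+K_z)} = (tanh K_x + tanh K_y tanh K_z)/(1 + tanh K_x tanh K_y tanh K_z)`,
and cyclically. -/
theorem kw_selfdual_surface (Kx Ky Kz : ℝ) (hx : 0 < Kx) (hy : 0 < Ky) (hz : 0 < Kz)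
    (h : Real.exp (-2*(Kx+Ky)) + Real.exp (-2*(Ky+Kz)) + Real.exp (-2*(Kx+Kz)) = 1) :
    Real.exp (-2*(Ky+Kz))
        = (Real.tanh Kx + Real.tanh Ky * Real.tanh Kz)
          / (1 + Real.tanh Kx * Real.tanh Ky * Real.tanh Kz) ∧
    Real.exp (-2*(Kx+Kz))
        = (Real.tanh Ky + Real.tanh Kz * Real.tanh Kx)
          / (1 + Real.tanh Kx * Real.tanh Ky * Real.tanh Kz) ∧
    Real.exp (-2*(Kx+Ky))
        = (Real.tanh Kz + Real.tanh Kx * Real.tanh Ky)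
          / (1 + Real.tanh Kx * Real.tanh Ky * Real.tanh Kz) :=
  kw_selfdual_surface_general Kx Ky Kz h
end
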